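/- arXiv:1202.2327 — 2 statements merged into one kernel-verified Lean document; each statement's English description precedes it below -/
import Mathlib

section
/- Let R be a unital ring and let H be a normal subgroup of a subgroup G of GL₃(R), where G contains t_{ij}(r) for all r ∈ R and distinct i,j ∈ {1,2,3}. Define I = { r ∈ R : t_{ij}(r) ∈ H for all i ≠ j }. Then I is a two-sided ideal of R. -/
/-- The elementary matrix `t_{ij}(r) = 1 + r·E_{ij}`. -/
def elemMat {R : Type*} [Ring R] (i j : Fin 3) (r : R) : Matrix (Fin 3) (Fin 3) R :=
  1 + Matrix.single i j r

lemma elemMat_mul_same {R : Type*} [Ring R] {i j : Fin 3} (hij : i ≠ j) (a b : R) :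
    elemMat i j a * elemMat i j b = elemMat i j (a + b) := by
  simp only [elemMat, add_mul, mul_add, one_mul, mul_one,
    Matrix.single_mul_single_of_ne (i := i) (j := j) (c := a) (h := hij.symm) (d := b), Matrix.single_add]
  abel

/-- The canonical unit with value `elemMat i j r`. -/
def elemUnit {R : Type*} [Ring R] {i j : Fin 3} (hij : i ≠ j) (r : R) :
    (Matrix (Fin 3) (Fin 3) R)ˣ where
  val := elemMat i j r
  inv := elemMat i j (-r)
  val_inv := by rw [elemMat_mul_same hij]; simp [elemMat]
  inv_val := by rw [elemMat_mul_same hij]; simp [elemMat]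

lemma elemMat_comm {R : Type*} [Ring R] {i j k : Fin 3} (hik : i ≠ k) (hkj : k ≠ j)
    (hij : i ≠ j) (a b : R) :
    elemMat i k a * elemMat k j b =
      elemMat k j b * (elemMat i k a * elemMat i j (a * b)) := by
  simp only [elemMat, add_mul, mul_add, one_mul, mul_one,
    Matrix.single_mul_single_same,
    Matrix.single_mul_single_of_ne (i := k) (j := j) (c := b) (h := hij.symm) (d := a),
    Matrix.single_mul_single_of_ne (i := i) (j := k) (c := a) (h := hik.symm) (d := (a*b)),
    Matrix.single_mul_single_of_ne (i := k) (j := j) (c := b) (h := hij.symm) (d := (a*b)), mul_zero]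
  abel

lemma elemUnit_commutator {R : Type*} [Ring R] {i j k : Fin 3} (hik : i ≠ k) (hkj : k ≠ j)
    (hij : i ≠ j) (a b : R) :
    elemUnit hij (a * b) =
      (elemUnit hik a)⁻¹ * (elemUnit hkj b)⁻¹ * elemUnit hik a * elemUnit hkj b := by
  have h : elemUnit hik a * elemUnit hkj b =
      elemUnit hkj b * (elemUnit hik a * elemUnit hij (a * b)) :=
    Units.ext (elemMat_comm hik hkj hij a b)
  symm
  calc (elemUnit hik a)⁻¹ * (elemUnit hkj b)⁻¹ * elemUnit hik a * elemUnit hkj b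
      = (elemUnit hik a)⁻¹ * ((elemUnit hkj b)⁻¹ *
          (elemUnit hik a * elemUnit hkj b)) := by group
    _ = elemUnit hij (a * b) := by
          rw [h, inv_mul_cancel_left, inv_mul_cancel_left]

/-- Let `H` be a normal subgroup of a subgroup `G` of `GL₃(R)`, where `G` contains all
elementary matrices `t_{ij}(r)`, `r ∈ R`, `i ≠ j`. Then
`I = { r ∈ R : t_{ij}(r) ∈ H for all i ≠ j }` is a two-sided ideal of `R`. -/
theorem elem_subgroup_ideal {R : Type*} [Ring R]
    (G H : Subgroup (Matrix (Fin 3) (Fin 3) R)ˣ) (hHG : H ≤ G)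
    (hnorm : ∀ g ∈ G, ∀ h ∈ H, g⁻¹ * h * g ∈ H)
    (hG : ∀ (i j : Fin 3), i ≠ j → ∀ r : R, ∀ u : (Matrix (Fin 3) (Fin 3) R)ˣ,
      u.val = elemMat i j r → u ∈ G)
    (I : Set R)
    (hI : I = { r : R | ∀ (i j : Fin 3), i ≠ j →
      ∀ u : (Matrix (Fin 3) (Fin 3) R)ˣ, u.val = elemMat i j r → u ∈ H }) :
    (0 : R) ∈ I ∧ (∀ r ∈ I, ∀ s ∈ I, r + s ∈ I) ∧ (∀ r ∈ I, -r ∈ I) ∧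
      (∀ r ∈ I, ∀ s : R, s * r ∈ I ∧ r * s ∈ I) := by
  subst hI
  -- membership reformulation
  have key : ∀ r : R,
      (r ∈ { r : R | ∀ (i j : Fin 3), i ≠ j →
        ∀ u : (Matrix (Fin 3) (Fin 3) R)ˣ, u.val = elemMat i j r → u ∈ H }) ↔
      (∀ (i j : Fin 3) (hij : i ≠ j), elemUnit hij r ∈ H) := by
    intro r
    constructor
    · intro h i j hij
      exact h i j hij _ rfl
    · intro h i j hij u hu
      have : u = elemUnit hij r := Units.ext hu
      rw [this]; exact h i j hij
  have unit_mul : ∀ {i j : Fin 3} (hij : i ≠ j) (a b : R),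
      elemUnit hij a * elemUnit hij b = elemUnit hij (a + b) := by
    intro i j hij a b
    exact Units.ext (elemMat_mul_same hij a b)
  have unit_inv : ∀ {i j : Fin 3} (hij : i ≠ j) (a : R),
      (elemUnit hij a)⁻¹ = elemUnit hij (-a) := by
    intro i j hij a
    exact Units.ext rfl
  have third : ∀ i j : Fin 3, i ≠ j → i ≠ -(i + j) ∧ -(i + j) ≠ j := by decide
  refine ⟨?_, ?_, ?_, ?_⟩
  · rw [key]
    intro i j hij
    have : elemUnit hij (0 : R) = 1 := Units.ext (by simp [elemUnit, elemMat])
    rw [this]; exact one_mem H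
  · intro r hr s hs
    rw [key] at hr hs ⊢
    intro i j hij
    rw [← unit_mul hij]
    exact mul_mem (hr i j hij) (hs i j hij)
  · intro r hr
    rw [key] at hr ⊢
    intro i j hij
    rw [← unit_inv hij]
    exact inv_mem (hr i j hij)
  · intro r hr s
    rw [key] at hr
    constructor
    · rw [key]
      intro i j hij
      obtain ⟨hik, hkj⟩ := third i j hij
      rw [elemUnit_commutator hik hkj hij s r]
      have hA : elemUnit hik s ∈ G := hG i _ hik s _ rfl
      have hB : elemUnit hkj r ∈ H := hr _ j hkj
      have h1 : (elemUnit hik s)⁻¹ * (elemUnit hkj r)⁻¹ * elemUnit hik s ∈ H := by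
        have := hnorm _ hA _ (inv_mem hB)
        simpa [mul_assoc] using this
      simpa [mul_assoc] using mul_mem h1 hB
    · rw [key]
      intro i j hij
      obtain ⟨hik, hkj⟩ := third i j hij
      rw [elemUnit_commutator hik hkj hij r s]
      have hA : elemUnit hik r ∈ H := hr i _ hik
      have hB : elemUnit hkj s ∈ G := hG _ j hkj s _ rfl
      have h1 : (elemUnit hkj s)⁻¹ * elemUnit hik r * elemUnit hkj s ∈ H :=
        hnorm _ hB _ hA
      have := mul_mem (inv_mem hA) h1
      simpa [mul_assoc] using this
end

section
/- Pigeonhole lemma for sequences over finite products: let c ≥ 1, N ≥ 1, and let (η_i)_{i<M} be a sequence of elements of a product ∏_{j∈J} R_j where each |R_j| ≤ c. Define L_N = c+1, L_{N-k} = c^{L_N+⋯+L_{N-k+1}+1}+1 for k = 1,…,N−1, L_0 = 0, and M = L_0+⋯+L_N+1. Then there exist indices n(0) < n'(0) < n(1) < n'(1) < ⋯ < n(N−1) < n'(N−1) < n(N) ≤ M−1 such that for each k < N, the projections of η_{n(k)} and η_{n'(k)} agree on any prescribed family of at most (L_{k+1}+⋯+L_N) coordinates depending only on indices in later blocks. 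-/
/-!
Each block `I_k` has length `L (k+1)`, which exceeds the number `c ^ (S N - S (k+1) + 1)` of
possible value patterns of `η` on the prescribed coordinates `j_m`, `S (k+1) ≤ m ≤ S N`. So two
positions of the block carry the same pattern, and these are `n(k) < n'(k)`; the blocks are
disjoint and ordered, which gives the interlacing, and `n(N) = S N` closes the chain.
-/

open Finset

lemma exists_lt_forall_eq_of_pow_card_lt {ι : Type*} [DecidableEq ι] {R : ι → Type*}
    [∀ i, Fintype (R i)] {c : ℕ} (hcard : ∀ i, Fintype.card (R i) ≤ c) (f : ℕ → ∀ i, R i)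
    (T : Finset ι) (s : ℕ) {ℓ : ℕ} (hℓ : c ^ #T < ℓ) :
    ∃ a b, s ≤ a ∧ a < b ∧ b < s + ℓ ∧ ∀ i ∈ T, f a i = f b i := by
  have hpatterns : Fintype.card (∀ i : T, R i) < Fintype.card (Fin ℓ) :=
    calc Fintype.card (∀ i : T, R i)
        = ∏ i : T, Fintype.card (R i) := Fintype.card_pi
      _ ≤ ∏ _i : T, c := prod_le_prod' fun i _ => hcard i
      _ = c ^ #T := by rw [prod_const, card_univ, Fintype.card_coe]
      _ < Fintype.card (Fin ℓ) := by rwa [Fintype.card_fin]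
  obtain ⟨t, t', hne, heq⟩ :=
    Fintype.exists_ne_map_eq_of_card_lt (fun t : Fin ℓ => fun i : T => f (s + t) i) hpatterns
  have hagree : ∀ i ∈ T, f (s + t) i = f (s + t') i := fun i hi => congrFun heq ⟨i, hi⟩
  have := t.isLt
  have := t'.isLt
  rcases lt_or_gt_of_ne (Fin.val_ne_of_ne hne) with h | h
  · exact ⟨s + t, s + t', by omega, by omega, by omega, hagree⟩
  · exact ⟨s + t', s + t, by omega, by omega, by omega, fun i hi => (hagree i hi).symm⟩

lemma sum_range_add_sum_Icc (L : ℕ → ℕ) {k N : ℕ} (h : k ≤ N) :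
    ∑ i ∈ range (k + 1), L i + ∑ i ∈ Icc (k + 1) N, L i = ∑ i ∈ range (N + 1), L i := by
  rw [← Ico_add_one_right_eq_Icc]
  exact sum_range_add_sum_Ico L (by omega)

lemma pow_sum_Icc_lt {c N : ℕ} {L : ℕ → ℕ} (hLN : L N = c + 1)
    (hLk : ∀ k, 1 ≤ k → k ≤ N - 1 →
      L (N - k) = c ^ ((∑ i ∈ Icc (N - k + 1) N, L i) + 1) + 1)
    {k : ℕ} (hk : k < N) :
    c ^ (∑ i ∈ Icc (k + 2) N, L i + 1) < L (k + 1) := by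
  rcases (Nat.succ_le_of_lt hk).eq_or_lt with hlast | hlt
  · subst hlast
    simp [hLN]
  · have hL := hLk (N - (k + 1)) (by omega) (by omega)
    rw [show N - (N - (k + 1)) = k + 1 by omega] at hL
    rw [hL]
    exact Nat.lt_succ_self _

lemma exists_pair_in_block {J : Type*} {R : J → Type*} [∀ j, Fintype (R j)] {c N : ℕ}
    (hcard : ∀ j, Fintype.card (R j) ≤ c) {L : ℕ → ℕ} (hLN : L N = c + 1)
    (hLk : ∀ k, 1 ≤ k → k ≤ N - 1 →
      L (N - k) = c ^ ((∑ i ∈ Icc (N - k + 1) N, L i) + 1) + 1)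
    {S : ℕ → ℕ} (hS : ∀ k, S k = ∑ i ∈ range (k + 1), L i)
    (η : ℕ → ∀ j, R j) (jmap : ℕ → J) {k : ℕ} (hk : k < N) :
    ∃ a b, S k ≤ a ∧ a < b ∧ b < S (k + 1) ∧
      ∀ m ∈ Icc (S (k + 1)) (S N), η a (jmap m) = η b (jmap m) := by
  have hSN : S (k + 1) + ∑ i ∈ Icc (k + 2) N, L i = S N := by
    rw [hS, hS]
    exact sum_range_add_sum_Icc L (show k + 1 ≤ N by omega)
  have hSk : S (k + 1) = S k + L (k + 1) := by rw [hS, hS, sum_range_succ]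
  have hT : #(Icc (S (k + 1)) (S N)) = ∑ i ∈ Icc (k + 2) N, L i + 1 := by
    rw [Nat.card_Icc]
    omega
  rw [hSk] at hT ⊢
  exact exists_lt_forall_eq_of_pow_card_lt (R := fun m => R (jmap m)) (fun m => hcard (jmap m))
    (fun n m => η n (jmap m)) _ (S k) (hT ▸ pow_sum_Icc_lt hLN hLk hk)

theorem pigeonhole_blocks_general {J : Type*} (R : J → Type*) [∀ j, Fintype (R j)]
    (c N : ℕ) (hcard : ∀ j, Fintype.card (R j) ≤ c)
    (L : ℕ → ℕ) (hLN : L N = c + 1)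
    (hLk : ∀ k, 1 ≤ k → k ≤ N - 1 →
      L (N - k) = c ^ ((∑ i ∈ Finset.Icc (N - k + 1) N, L i) + 1) + 1)
    (S : ℕ → ℕ) (hS : ∀ k, S k = ∑ i ∈ Finset.range (k + 1), L i)
    (M : ℕ) (hM : M = S N + 1)
    (η : ℕ → ∀ j, R j) (jmap : ℕ → J) :
    ∃ nn nn' : ℕ → ℕ,
      (∀ k < N, S k ≤ nn k ∧ nn k < nn' k ∧ nn' k < S (k + 1)) ∧
      (∀ k, k + 1 < N → nn' k < nn (k + 1)) ∧
      nn N = S N ∧ nn N ≤ M - 1 ∧ (N - 1 < N → nn' (N - 1) < nn N) ∧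
      (∀ k < N, ∀ m : ℕ, S (k + 1) ≤ m → m ≤ S N →
        η (nn k) (jmap m) = η (nn' k) (jmap m)) := by
  choose! a b hab using fun k (hk : k < N) => exists_pair_in_block hcard hLN hLk hS η jmap hk
  refine ⟨fun k => if k < N then a k else S N, b, fun k hk => ?_, fun k hk => ?_, by simp,
    by simp [hM], fun hN => ?_, fun k hk m hm hm' => ?_⟩
  · obtain ⟨hSa, hab', hbS, -⟩ := hab k hk
    simp only [hk, if_true]
    exact ⟨hSa, hab', hbS⟩
  · have := (hab k (by omega)).2.2.1
    have := (hab (k + 1) hk).1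
    simp only [hk, if_true]
    omega
  · have := (hab (N - 1) hN).2.2.1
    rw [Nat.sub_add_cancel (by omega)] at this
    simpa using this
  · simpa [hk] using (hab k hk).2.2.2 m (mem_Icc.2 ⟨hm, hm'⟩)

/-- Pigeonhole lemma for sequences over finite products: let `c, N ≥ 1`,
`L_0 = 0`, `L_N = c+1`, `L_{N-k} = c^{L_N+⋯+L_{N-k+1}+1}+1` for `1 ≤ k ≤ N-1`, set
`S k = L_0 + ⋯ + L_k` and `M = S N + 1`, and let `(η_i)_{i<M}` be a sequence in a
product `∏_{j∈J} R_j` with `|R_j| ≤ c`, together with a prescribed coordinate `j_m`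
for each position `m`. Then there are indices
`n(0) < n'(0) < n(1) < ⋯ < n(N-1) < n'(N-1) < n(N) ≤ M-1`, with `n(k), n'(k)` lying in
the block `I_k = [S k, S (k+1) - 1]` and `n(N) = S N`, such that for each `k < N` the
projections of `η_{n(k)}` and `η_{n'(k)}` agree on all prescribed coordinates `j_m`
with `m` in the later blocks `I_{k+1} ∪ ⋯ ∪ I_N`. -/
theorem pigeonhole_blocks {J : Type*} (R : J → Type*) [∀ j, Fintype (R j)]
    (c N : ℕ) (hc : 1 ≤ c) (hN : 1 ≤ N) (hcard : ∀ j, Fintype.card (R j) ≤ c)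
    (L : ℕ → ℕ) (hL0 : L 0 = 0) (hLN : L N = c + 1)
    (hLk : ∀ k, 1 ≤ k → k ≤ N - 1 →
      L (N - k) = c ^ ((∑ i ∈ Finset.Icc (N - k + 1) N, L i) + 1) + 1)
    (S : ℕ → ℕ) (hS : ∀ k, S k = ∑ i ∈ Finset.range (k + 1), L i)
    (M : ℕ) (hM : M = S N + 1)
    (η : ℕ → ∀ j, R j) (jmap : ℕ → J) :
    ∃ nn nn' : ℕ → ℕ,
      (∀ k < N, S k ≤ nn k ∧ nn k < nn' k ∧ nn' k < S (k + 1)) ∧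
      (∀ k, k + 1 < N → nn' k < nn (k + 1)) ∧
      nn N = S N ∧ nn N ≤ M - 1 ∧ (N - 1 < N → nn' (N - 1) < nn N) ∧
      (∀ k < N, ∀ m : ℕ, S (k + 1) ≤ m → m ≤ S N →
        η (nn k) (jmap m) = η (nn' k) (jmap m)) :=
  pigeonhole_blocks_general R c N hcard L hLN hLk S hS M hM η jmap
end
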